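/- For x_1, ..., x_n in a commutative ring, ∏_{i≠j} (x_i - x_j) · (-1)^{n(n-1)/2} equals the determinant of the n×n matrix whose (i,j) entry is S_{i+j-2}, where S_μ = x_1^μ + ... + x_n^μ (with S_0 = n). -/
import Mathlib


open Finset

theorem prod_diff_eq_hankel_det {R : Type*} [CommRing R] (n : ℕ) (x : Fin n → R)
    (S : ℕ → R) (hS : ∀ μ, S μ = ∑ i, x i ^ μ) :
    (∏ i, ∏ j ∈ univ.filter (fun j => j ≠ i), (x i - x j)) * (-1 : R) ^ (n * (n - 1) / 2) =
      Matrix.det (Matrix.of fun i j : Fin n => S ((i : ℕ) + (j : ℕ))) := by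
  have hM : (Matrix.of fun i j : Fin n => S ((i : ℕ) + (j : ℕ))) =
      (Matrix.vandermonde x).transpose * Matrix.vandermonde x := by
    ext i j
    simp [Matrix.mul_apply, Matrix.vandermonde, hS, pow_add]
  have hcard : ∑ i : Fin n, #(Ioi i) = n * (n - 1) / 2 := by
    have h1 : ∑ i : Fin n, #(Ioi i) = ∑ i ∈ Finset.range n, (n - 1 - i) := by
      simp [Fin.card_Ioi, Fin.sum_univ_eq_sum_range (fun i => n - 1 - i)]
    rw [h1, Finset.sum_range_reflect (fun i => i) n, Finset.sum_range_id]
  have key : (∏ i, ∏ j ∈ univ.filter (fun j => j ≠ i), (x i - x j)) =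
      (-1 : R) ^ (n * (n - 1) / 2) * (∏ i, ∏ j ∈ Ioi i, (x j - x i)) ^ 2 := by
    have h := prod_prod_Ioi_mul_eq_prod_prod_off_diag (fun a b : Fin n => x b - x a)
    calc (∏ i, ∏ j ∈ univ.filter (fun j => j ≠ i), (x i - x j))
        = ∏ i, ∏ j ∈ Ioi i, ((x i - x j) * (x j - x i)) := by
          rw [h]
          exact Finset.prod_congr rfl fun i _ =>
            Finset.prod_congr (by ext j; simp) fun _ _ => rfl
      _ = ∏ i, ∏ j ∈ Ioi i, ((-1 : R) * (x j - x i) ^ 2) := by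
          refine Finset.prod_congr rfl fun i _ => Finset.prod_congr rfl fun j _ => ?_; ring
      _ = (-1 : R) ^ (n * (n - 1) / 2) * (∏ i, ∏ j ∈ Ioi i, (x j - x i)) ^ 2 := by
          simp_rw [Finset.prod_mul_distrib, Finset.prod_const, ← Finset.prod_pow]
          rw [Finset.prod_pow_eq_pow_sum, hcard]
  rw [hM, Matrix.det_mul, Matrix.det_transpose, Matrix.det_vandermonde, key]
  ring_nf
  rw [mul_comm (n * (n - 1) / 2) 2, pow_mul, neg_one_sq, one_pow, mul_one]
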